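/- Let ⟨(T_ζ, f_ζ) : ζ < ξ⟩ be a ≤-increasing sequence in Q* indexed by a limit ordinal ξ < λ, with α(T_{ζ₁}) < α(T_{ζ₂}) for ζ₁ < ζ₂. Set T_ξ = ⋃_{ζ<ξ} T_ζ and α = sup_{ζ<ξ} α(T_ζ), and for η ∈ T_ξ let f_ξ(η) = ⋃{ f_ζ(η) : ζ₀(η) ≤ ζ < ξ } where ζ₀(η) is least with η ∈ T_{ζ₀(η)}. Then (T_ξ, f_ξ) ∈ Q* and it is the least upper bound of the sequence in Q*. In particular, Q* is (<λ)-complete. -/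

import Mathlib

open Ordinal Set Cardinal

/-- A transfinite binary sequence: a length and values, zero beyond the length. -/
structure BSeq where
  len : Ordinal.{0}
  val : Ordinal.{0} → Bool
  val_eq_false : ∀ β, len ≤ β → val β = false

namespace BSeq

/-- The empty sequence. -/
def nil : BSeq := ⟨0, fun _ => false, fun _ _ => rfl⟩

/-- Restriction `η↾β` of a sequence to length `β`. -/
noncomputable def restrict (η : BSeq) (β : Ordinal) : BSeq :=
  ⟨min η.len β, fun γ => if γ < β then η.val γ else false, by
    intro γ hγ
    rcases min_le_iff.mp hγ with h | h
    · by_cases hb : γ < β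
      · simpa [hb] using η.val_eq_false γ h
      · simp [hb]
    · simp [not_lt.mpr h]⟩

/-- `ν ⊴ η` : `ν` is an initial segment of `η`. -/
def IsInitSeg (ν η : BSeq) : Prop :=
  ν.len ≤ η.len ∧ ∀ β < ν.len, ν.val β = η.val β

/-- `ν ◁ η` : `ν` is a proper initial segment of `η`. -/
def IsStrictInitSeg (ν η : BSeq) : Prop :=
  ν.IsInitSeg η ∧ ν.len < η.len

/-- `η⌢⟨b⟩`, appending one bit. -/
noncomputable def snoc (η : BSeq) (b : Bool) : BSeq :=
  ⟨η.len + 1, fun β => if β = η.len then b else η.val β, by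
    intro β hβ
    have h1 : η.len < β := by
      exact lt_of_lt_of_le (lt_add_one η.len) hβ
    try simp only []
    rw [if_neg (ne_of_gt h1)]
    exact η.val_eq_false β h1.le⟩

end BSeq

/-- The level `T_{[β]} = T ∩ 2^β`. -/
def level (T : Set BSeq) (β : Ordinal) : Set BSeq := {η ∈ T | η.len = β}

/-- `T_{[<β]} = T ∩ 2^{<β}`. -/
def levelLT (T : Set BSeq) (β : Ordinal) : Set BSeq := {η ∈ T | η.len < β}

/-- `lim_δ(T) = {η ∈ 2^δ : ∀ β < δ, η↾β ∈ T}`. -/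
def limAt (T : Set BSeq) (δ : Ordinal) : Set BSeq :=
  {η | η.len = δ ∧ ∀ β < δ, η.restrict β ∈ T}

/-- `T ⊆ 2^{<α}` is an `α`-tree. -/
structure IsTree (α : Ordinal) (T : Set BSeq) : Prop where
  limit : Order.IsSuccLimit α
  len_lt : ∀ η ∈ T, η.len < α
  nil_mem : BSeq.nil ∈ T
  downClosed : ∀ ν η : BSeq, ν.IsStrictInitSeg η → η ∈ T → ν ∈ T
  succ_mem : ∀ η ∈ T, ∀ b : Bool, η.snoc b ∈ T
  ext_mem : ∀ η ∈ T, ∀ β, η.len ≤ β → β < α → ∃ ρ ∈ T, η.IsInitSeg ρ ∧ ρ.len = β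

/-- `T` has true height `α`: every node lies on a cofinal branch through `T`. -/
def TrueHeight (α : Ordinal) (T : Set BSeq) : Prop :=
  ∀ η ∈ T, ∃ ν : BSeq, ν.len = α ∧ η.IsStrictInitSeg ν ∧ ∀ β < α, ν.restrict β ∈ T

/-- A condition of the forcing `Q`: a tree of true height `α` (a limit ordinal)
omitting at most one limit point at each limit level. -/
structure IsCond (α : Ordinal) (T : Set BSeq) : Prop where
  tree : IsTree α T
  trueHeight : TrueHeight α T
  omits_le_one : ∀ δ < α, Order.IsSuccLimit δ → (limAt T δ \ level T δ).Subsingleton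

/-- The end-extension order of `Q`. -/
def QLe (α₁ : Ordinal) (T₁ : Set BSeq) (α₂ : Ordinal) (T₂ : Set BSeq) : Prop :=
  α₁ ≤ α₂ ∧ T₁ = levelLT T₂ α₁

/-- `f` is a witness for `T` (of height `α`). -/
def IsWitness (α : Ordinal) (T : Set BSeq) (f : BSeq → BSeq) : Prop :=
  ∀ η ∈ T, f η ∈ limAt T α ∧ η.IsStrictInitSeg (f η)

/-- The order of `Q^*`. -/
def QsLe (α₁ : Ordinal) (T₁ : Set BSeq) (f₁ : BSeq → BSeq)
    (α₂ : Ordinal) (T₂ : Set BSeq) (f₂ : BSeq → BSeq) : Prop :=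
  QLe α₁ T₁ α₂ T₂ ∧ ∀ η ∈ T₁, (f₁ η).IsInitSeg (f₂ η)

/-- `C` is a club (closed unbounded) subset of `μ`. -/
def IsClubIn (C : Set Ordinal) (μ : Ordinal) : Prop :=
  C ⊆ Set.Iio μ ∧
  (∀ δ < μ, Order.IsSuccLimit δ → (∀ β < δ, ∃ γ ∈ C, β < γ ∧ γ < δ) → δ ∈ C) ∧
  (∀ β < μ, ∃ γ ∈ C, β < γ ∧ γ < μ)

/-- `S` is stationary in `μ`. -/
def IsStationaryIn (S : Set Ordinal) (μ : Ordinal) : Prop :=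
  ∀ C, IsClubIn C μ → (S ∩ C).Nonempty

/-- The set of accumulation points of a set of ordinals. -/
def accPts (C : Set Ordinal) : Set Ordinal :=
  {β | 0 < β ∧ ∀ γ < β, ∃ δ ∈ C, γ < δ ∧ δ < β}

/-!
Everything rests on coherence: since the chain end-extends, `T_ζ` is the part of
`T_ξ = ⋃ T_ζ` below `α(T_ζ)`, so each property of `T_ξ` at a level below `α` (the tree axioms,
at most one omitted limit point at a limit level) is inherited from some `T_ζ`. For fixed `η`
the branches `f_ζ(η)` form a `⊴`-chain; their union is a branch of length `α` through `T_ξ`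
extending `η`, which gives both the witness and the true height. If `(S, h)` bounds the chain,
then `S_{[<α]} = ⋃ S_{[<α(T_ζ)]} = T_ξ`, and `h(η)` extends every `f_ζ(η)`, whose lengths are
cofinal in `α`, hence extends their union.
-/

namespace BSeq

@[ext]
theorem ext {η ν : BSeq} (hlen : η.len = ν.len) (hval : η.val = ν.val) : η = ν := by
  cases η; cases ν; subst hlen hval; rfl

theorem lt_len_of_val_eq_true {ν : BSeq} {β : Ordinal} (h : ν.val β = true) : β < ν.len :=
  not_le.1 fun hle => by simp [ν.val_eq_false β hle] at h

theorem IsInitSeg.refl (η : BSeq) : η.IsInitSeg η := ⟨le_rfl, fun _ _ => rfl⟩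

instance : Std.Refl IsInitSeg := ⟨IsInitSeg.refl⟩

theorem IsInitSeg.trans {ν η μ : BSeq} (h₁ : ν.IsInitSeg η) (h₂ : η.IsInitSeg μ) :
    ν.IsInitSeg μ :=
  ⟨h₁.1.trans h₂.1, fun β hβ => (h₁.2 β hβ).trans (h₂.2 β (hβ.trans_le h₁.1))⟩

theorem IsStrictInitSeg.trans_isInitSeg {ν η μ : BSeq} (h₁ : ν.IsStrictInitSeg η)
    (h₂ : η.IsInitSeg μ) : ν.IsStrictInitSeg μ :=
  ⟨h₁.1.trans h₂, h₁.2.trans_le h₂.1⟩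

theorem IsInitSeg.restrict_eq {ν η : BSeq} (h : ν.IsInitSeg η) {β : Ordinal} (hβ : β ≤ ν.len) :
    η.restrict β = ν.restrict β := by
  ext1
  · simp only [restrict, min_eq_right hβ, min_eq_right (hβ.trans h.1)]
  · funext γ
    simp only [restrict]
    split_ifs with hγ
    · exact (h.2 γ (hγ.trans_le hβ)).symm
    · rfl

open Classical in
noncomputable def sUnion (A : Ordinal) (F : Set BSeq) : BSeq where
  len := A
  val β := decide (β < A ∧ ∃ ν ∈ F, ν.val β = true)
  val_eq_false _ hβ := decide_eq_false fun h => not_lt.2 hβ h.1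

theorem sUnion_val_eq_true {A : Ordinal} {F : Set BSeq} {β : Ordinal} :
    (sUnion A F).val β = true ↔ β < A ∧ ∃ ν ∈ F, ν.val β = true := by
  simp [sUnion]

theorem isInitSeg_sUnion {A : Ordinal} {F : Set BSeq} (hF : IsChain IsInitSeg F) {ν : BSeq}
    (hν : ν ∈ F) (hA : ν.len ≤ A) : ν.IsInitSeg (sUnion A F) := by
  refine ⟨hA, fun β hβ => Bool.eq_iff_iff.2 ?_⟩
  rw [sUnion_val_eq_true]
  refine ⟨fun hνβ => ⟨hβ.trans_le hA, ν, hν, hνβ⟩, fun ⟨_, μ, hμ, hμβ⟩ => ?_⟩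
  rcases hF.total hν hμ with hνμ | hμν
  · rwa [hνμ.2 β hβ]
  · rwa [← hμν.2 β (lt_len_of_val_eq_true hμβ)]

theorem sUnion_isInitSeg {A : Ordinal} {F : Set BSeq} {μ : BSeq} (hA : A ≤ μ.len)
    (hF : ∀ ν ∈ F, ν.IsInitSeg μ) (hcof : ∀ β < A, ∃ ν ∈ F, β < ν.len) :
    (sUnion A F).IsInitSeg μ := by
  refine ⟨hA, fun β hβ => Bool.eq_iff_iff.2 ?_⟩
  rw [sUnion_val_eq_true]
  refine ⟨fun ⟨_, ν, hν, hνβ⟩ => ?_, fun hμβ => ?_⟩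
  · rwa [← (hF ν hν).2 β (lt_len_of_val_eq_true hνβ)]
  · obtain ⟨ν, hν, hβν⟩ := hcof β hβ
    exact ⟨hβ, ν, hν, by rwa [(hF ν hν).2 β hβν]⟩

end BSeq

theorem IsWitness.trueHeight {α : Ordinal} {T : Set BSeq} {f : BSeq → BSeq}
    (hf : IsWitness α T f) : TrueHeight α T :=
  fun η hη => ⟨f η, (hf η hη).1.1, (hf η hη).2, (hf η hη).1.2⟩

theorem limAt_levelLT {T : Set BSeq} {α δ : Ordinal} (h : δ ≤ α) :
    limAt (levelLT T α) δ = limAt T δ := by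
  ext η
  refine and_congr_right fun _ => forall₂_congr fun β hβ => ?_
  exact and_iff_left ((min_le_right _ β).trans_lt (hβ.trans_le h))

theorem levelLT_csSup {ι : Type*} {s : Set ι} {a : ι → Ordinal} (hne : s.Nonempty)
    (hbdd : BddAbove (a '' s)) (S : Set BSeq) :
    levelLT S (sSup (a '' s)) = ⋃ i ∈ s, levelLT S (a i) := by
  ext η
  simp only [levelLT, mem_ofPred_eq, mem_iUnion, exists_prop, lt_csSup_iff hbdd (hne.image a),
    exists_mem_image]
  tauto

theorem isSuccLimit_csSup_image {ι : Type*} {s : Set ι} {a : ι → Ordinal} (hne : s.Nonempty)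
    (hbdd : BddAbove (a '' s)) (hlim : ∀ i ∈ s, Order.IsSuccLimit (a i)) :
    Order.IsSuccLimit (sSup (a '' s)) := by
  by_contra h
  obtain ⟨i, hi, heq⟩ := csSup_mem_of_not_isSuccLimit (hne.image a) hbdd h
  exact h (heq ▸ hlim i hi)

theorem QLe.subset {α₁ α₂ : Ordinal} {T₁ T₂ : Set BSeq} (h : QLe α₁ T₁ α₂ T₂) : T₁ ⊆ T₂ :=
  h.2 ▸ fun _ hη => hη.1

section Chain

variable {ι : Type*} [LinearOrder ι] {s : Set ι} {a : ι → Ordinal} {T : ι → Set BSeq}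
  {f : ι → BSeq → BSeq}

def IsQChain (s : Set ι) (a : ι → Ordinal) (T : ι → Set BSeq) : Prop :=
  ∀ i ∈ s, ∀ j ∈ s, i < j → QLe (a i) (T i) (a j) (T j)

def IsQsChain (s : Set ι) (a : ι → Ordinal) (T : ι → Set BSeq) (f : ι → BSeq → BSeq) : Prop :=
  ∀ i ∈ s, ∀ j ∈ s, i < j → QsLe (a i) (T i) (f i) (a j) (T j) (f j)

theorem IsQsChain.isQChain (hQs : IsQsChain s a T f) : IsQChain s a T :=
  fun i hi j hj hij => (hQs i hi j hj hij).1

theorem IsQChain.mono (hQ : IsQChain s a T) {i j : ι} (hi : i ∈ s) (hj : j ∈ s) (hij : i ≤ j) :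
    a i ≤ a j ∧ T i ⊆ T j := by
  rcases hij.lt_or_eq with hij | rfl
  · exact ⟨(hQ i hi j hj hij).1, (hQ i hi j hj hij).subset⟩
  · exact ⟨le_rfl, subset_rfl⟩

theorem IsQChain.eq_levelLT_biUnion (hQ : IsQChain s a T)
    (hlen : ∀ i ∈ s, ∀ η ∈ T i, η.len < a i) {i : ι} (hi : i ∈ s) :
    T i = levelLT (⋃ j ∈ s, T j) (a i) := by
  refine Subset.antisymm (fun η hη => ⟨mem_biUnion hi hη, hlen i hi η hη⟩) ?_
  rintro η ⟨hη, hηi⟩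
  obtain ⟨j, hj, hηj⟩ := mem_iUnion₂.1 hη
  rcases le_or_gt j i with hji | hij
  · exact (hQ.mono hj hi hji).2 hηj
  · rw [(hQ i hi j hj hij).2]
    exact ⟨hηj, hηi⟩

theorem IsQChain.exists_mem_lt_of_lt_csSup (hQ : IsQChain s a T)
    {η : BSeq} (hη : η ∈ ⋃ i ∈ s, T i) {β : Ordinal} (hβ : β < sSup (a '' s)) :
    ∃ i ∈ s, η ∈ T i ∧ β < a i := by
  obtain ⟨i, hi, hηi⟩ := mem_iUnion₂.1 hη
  obtain ⟨_, ⟨j, hj, rfl⟩, hβj⟩ := exists_lt_of_lt_csSup (Set.Nonempty.image a ⟨i, hi⟩) hβ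
  rcases le_total i j with hij | hji
  · exact ⟨j, hj, (hQ.mono hi hj hij).2 hηi, hβj⟩
  · exact ⟨i, hi, hηi, hβj.trans_le (hQ.mono hj hi hji).1⟩

theorem IsQChain.isTree_biUnion (hQ : IsQChain s a T) (hne : s.Nonempty)
    (hbdd : BddAbove (a '' s)) (htree : ∀ i ∈ s, IsTree (a i) (T i)) :
    IsTree (sSup (a '' s)) (⋃ i ∈ s, T i) where
  limit := isSuccLimit_csSup_image hne hbdd fun i hi => (htree i hi).limit
  len_lt η hη := by
    obtain ⟨i, hi, hηi⟩ := mem_iUnion₂.1 hη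
    exact ((htree i hi).len_lt η hηi).trans_le (le_csSup hbdd (mem_image_of_mem a hi))
  nil_mem := by
    obtain ⟨i, hi⟩ := hne
    exact mem_biUnion hi (htree i hi).nil_mem
  downClosed ν η hνη hη := by
    obtain ⟨i, hi, hηi⟩ := mem_iUnion₂.1 hη
    exact mem_biUnion hi ((htree i hi).downClosed ν η hνη hηi)
  succ_mem η hη b := by
    obtain ⟨i, hi, hηi⟩ := mem_iUnion₂.1 hη
    exact mem_biUnion hi ((htree i hi).succ_mem η hηi b)
  ext_mem η hη β hηβ hβ := by
    obtain ⟨i, hi, hηi, hβi⟩ := hQ.exists_mem_lt_of_lt_csSup hη hβ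
    obtain ⟨ρ, hρ, hηρ, hρβ⟩ := (htree i hi).ext_mem η hηi β hηβ hβi
    exact ⟨ρ, mem_biUnion hi hρ, hηρ, hρβ⟩

theorem IsQChain.omits_le_one_biUnion (hQ : IsQChain s a T) (hne : s.Nonempty)
    (hcond : ∀ i ∈ s, IsCond (a i) (T i)) {δ : Ordinal}
    (hδ : δ < sSup (a '' s)) (hδlim : Order.IsSuccLimit δ) :
    (limAt (⋃ i ∈ s, T i) δ \ level (⋃ i ∈ s, T i) δ).Subsingleton := by
  obtain ⟨_, ⟨i, hi, rfl⟩, hδi⟩ := exists_lt_of_lt_csSup (hne.image a) hδ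
  refine ((hcond i hi).omits_le_one δ hδi hδlim).anti ?_
  rw [hQ.eq_levelLT_biUnion (fun j hj => (hcond j hj).tree.len_lt) hi, limAt_levelLT hδi.le]
  exact sdiff_subset_sdiff_right fun η hη => ⟨hη.1.1, hη.2⟩

/-- The paper's `f_ξ`: the indices `ζ₀(η) ≤ ζ < ξ` are exactly those `i ∈ s` with `η ∈ T i`. -/
noncomputable def chainWitness (s : Set ι) (a : ι → Ordinal) (T : ι → Set BSeq)
    (f : ι → BSeq → BSeq) (η : BSeq) : BSeq :=
  BSeq.sUnion (sSup (a '' s)) ((f · η) '' {i ∈ s | η ∈ T i})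

theorem IsQsChain.isChain_branches (hQs : IsQsChain s a T f) (η : BSeq) :
    IsChain BSeq.IsInitSeg ((f · η) '' {i ∈ s | η ∈ T i}) := by
  rintro _ ⟨i, ⟨hi, hηi⟩, rfl⟩ _ ⟨j, ⟨hj, hηj⟩, rfl⟩ hfij
  rcases lt_or_gt_of_ne (ne_of_apply_ne (f · η) hfij) with hij | hji
  · exact Or.inl ((hQs i hi j hj hij).2 η hηi)
  · exact Or.inr ((hQs j hj i hi hji).2 η hηj)

theorem IsQsChain.isInitSeg_chainWitness (hQs : IsQsChain s a T f)
    (hwit : ∀ i ∈ s, IsWitness (a i) (T i) (f i)) (hbdd : BddAbove (a '' s)) {i : ι}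
    (hi : i ∈ s) {η : BSeq} (hηi : η ∈ T i) : (f i η).IsInitSeg (chainWitness s a T f η) :=
  BSeq.isInitSeg_sUnion (hQs.isChain_branches η) ⟨i, ⟨hi, hηi⟩, rfl⟩
    ((hwit i hi η hηi).1.1 ▸ le_csSup hbdd (mem_image_of_mem a hi))

theorem IsQsChain.isWitness_chainWitness (hQs : IsQsChain s a T f)
    (hwit : ∀ i ∈ s, IsWitness (a i) (T i) (f i)) (hbdd : BddAbove (a '' s)) :
    IsWitness (sSup (a '' s)) (⋃ i ∈ s, T i) (chainWitness s a T f) := by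
  intro η hη
  obtain ⟨i, hi, hηi⟩ := mem_iUnion₂.1 hη
  refine ⟨⟨rfl, fun β hβ => ?_⟩, ?_⟩
  · obtain ⟨j, hj, hηj, hβj⟩ := hQs.isQChain.exists_mem_lt_of_lt_csSup hη hβ
    have hfj := hwit j hj η hηj
    rw [(hQs.isInitSeg_chainWitness hwit hbdd hj hηj).restrict_eq (hfj.1.1 ▸ hβj.le)]
    exact mem_biUnion hj (hfj.1.2 β hβj)
  · exact (hwit i hi η hηi).2.trans_isInitSeg (hQs.isInitSeg_chainWitness hwit hbdd hi hηi)

theorem IsQsChain.isCond_biUnion (hQs : IsQsChain s a T f) (hne : s.Nonempty)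
    (hbdd : BddAbove (a '' s)) (hcond : ∀ i ∈ s, IsCond (a i) (T i))
    (hwit : ∀ i ∈ s, IsWitness (a i) (T i) (f i)) :
    IsCond (sSup (a '' s)) (⋃ i ∈ s, T i) where
  tree := hQs.isQChain.isTree_biUnion hne hbdd fun i hi => (hcond i hi).tree
  trueHeight := (hQs.isWitness_chainWitness hwit hbdd).trueHeight
  omits_le_one _ hδ hδlim := hQs.isQChain.omits_le_one_biUnion hne hcond hδ hδlim

theorem IsQsChain.qsLe_chainWitness (hQs : IsQsChain s a T f)
    (hcond : ∀ i ∈ s, IsCond (a i) (T i)) (hwit : ∀ i ∈ s, IsWitness (a i) (T i) (f i))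
    (hbdd : BddAbove (a '' s)) {i : ι} (hi : i ∈ s) :
    QsLe (a i) (T i) (f i) (sSup (a '' s)) (⋃ j ∈ s, T j) (chainWitness s a T f) :=
  ⟨⟨le_csSup hbdd (mem_image_of_mem a hi),
      hQs.isQChain.eq_levelLT_biUnion (fun j hj => (hcond j hj).tree.len_lt) hi⟩,
    fun _ hη => hQs.isInitSeg_chainWitness hwit hbdd hi hη⟩

theorem IsQsChain.chainWitness_qsLe (hQs : IsQsChain s a T f) (hne : s.Nonempty)
    (hbdd : BddAbove (a '' s)) (hwit : ∀ i ∈ s, IsWitness (a i) (T i) (f i)) {β : Ordinal}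
    {S : Set BSeq} {h : BSeq → BSeq} (hS : IsWitness β S h)
    (hub : ∀ i ∈ s, QsLe (a i) (T i) (f i) β S h) :
    QsLe (sSup (a '' s)) (⋃ i ∈ s, T i) (chainWitness s a T f) β S h := by
  have hU : ⋃ i ∈ s, T i = levelLT S (sSup (a '' s)) := by
    rw [levelLT_csSup hne hbdd]
    exact iUnion₂_congr fun i hi => (hub i hi).1.2
  have hA : sSup (a '' s) ≤ β :=
    csSup_le (hne.image a) (forall_mem_image.2 fun i hi => (hub i hi).1.1)
  refine ⟨⟨hA, hU⟩, fun η hη => BSeq.sUnion_isInitSeg ?_ ?_ ?_⟩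
  · rw [(hS η (hU ▸ hη).1).1.1]
    exact hA
  · rintro _ ⟨i, ⟨hi, hηi⟩, rfl⟩
    exact (hub i hi).2 η hηi
  · intro γ hγ
    obtain ⟨i, hi, hηi, hγi⟩ := hQs.isQChain.exists_mem_lt_of_lt_csSup hη hγ
    exact ⟨f i η, ⟨i, ⟨hi, hηi⟩, rfl⟩, (hwit i hi η hηi).1.1 ▸ hγi⟩

end Chain

theorem stmt5_general (lam : Cardinal)
    (ξ : Ordinal) (hξlim : Order.IsSuccLimit ξ)
    (a : Ordinal → Ordinal) (T : Ordinal → Set BSeq) (f : Ordinal → BSeq → BSeq)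
    (hcond : ∀ ζ < ξ, IsCond (a ζ) (T ζ) ∧ IsWitness (a ζ) (T ζ) (f ζ) ∧ a ζ < lam.ord)
    (hmono : ∀ ζ₁ ζ₂, ζ₁ < ζ₂ → ζ₂ < ξ →
      QsLe (a ζ₁) (T ζ₁) (f ζ₁) (a ζ₂) (T ζ₂) (f ζ₂) ∧ a ζ₁ < a ζ₂) :
    IsCond (sSup (a '' Set.Iio ξ)) (⋃ ζ ∈ Set.Iio ξ, T ζ) ∧
    ∃ g : BSeq → BSeq,
      IsWitness (sSup (a '' Set.Iio ξ)) (⋃ ζ ∈ Set.Iio ξ, T ζ) g ∧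
      (∀ ζ < ξ, ∀ η ∈ T ζ, (f ζ η).IsInitSeg (g η)) ∧
      (∀ ζ < ξ,
        QsLe (a ζ) (T ζ) (f ζ) (sSup (a '' Set.Iio ξ)) (⋃ ζ ∈ Set.Iio ξ, T ζ) g) ∧
      ∀ (β : Ordinal) (S : Set BSeq) (h : BSeq → BSeq),
        IsCond β S → IsWitness β S h →
        (∀ ζ < ξ, QsLe (a ζ) (T ζ) (f ζ) β S h) →
        QsLe (sSup (a '' Set.Iio ξ)) (⋃ ζ ∈ Set.Iio ξ, T ζ) g β S h := by
  have hQs : IsQsChain (Iio ξ) a T f := fun i _ j hj hij => (hmono i j hij hj).1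
  have hQcond : ∀ i ∈ Iio ξ, IsCond (a i) (T i) := fun i hi => (hcond i hi).1
  have hwit : ∀ i ∈ Iio ξ, IsWitness (a i) (T i) (f i) := fun i hi => (hcond i hi).2.1
  have hne : (Iio ξ).Nonempty := ⟨0, hξlim.pos⟩
  have hbdd : BddAbove (a '' Iio ξ) :=
    ⟨lam.ord, forall_mem_image.2 fun i hi => (hcond i hi).2.2.le⟩
  exact ⟨hQs.isCond_biUnion hne hbdd hQcond hwit, chainWitness (Iio ξ) a T f,
    hQs.isWitness_chainWitness hwit hbdd,
    fun _ hζ _ hη => hQs.isInitSeg_chainWitness hwit hbdd hζ hη,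
    fun _ hζ => hQs.qsLe_chainWitness hQcond hwit hbdd hζ,
    fun _ _ _ _ hW hub => hQs.chainWitness_qsLe hne hbdd hwit hW hub⟩

theorem stmt5 (lam : Cardinal) (hlam : lam.IsInaccessible)
    (ξ : Ordinal) (hξlim : Order.IsSuccLimit ξ) (hξ : ξ < lam.ord)
    (a : Ordinal → Ordinal) (T : Ordinal → Set BSeq) (f : Ordinal → BSeq → BSeq)
    (hcond : ∀ ζ < ξ, IsCond (a ζ) (T ζ) ∧ IsWitness (a ζ) (T ζ) (f ζ) ∧ a ζ < lam.ord)
    (hmono : ∀ ζ₁ ζ₂, ζ₁ < ζ₂ → ζ₂ < ξ →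
      QsLe (a ζ₁) (T ζ₁) (f ζ₁) (a ζ₂) (T ζ₂) (f ζ₂) ∧ a ζ₁ < a ζ₂) :
    IsCond (sSup (a '' Set.Iio ξ)) (⋃ ζ ∈ Set.Iio ξ, T ζ) ∧
    ∃ g : BSeq → BSeq,
      IsWitness (sSup (a '' Set.Iio ξ)) (⋃ ζ ∈ Set.Iio ξ, T ζ) g ∧
      (∀ ζ < ξ, ∀ η ∈ T ζ, (f ζ η).IsInitSeg (g η)) ∧
      (∀ ζ < ξ,
        QsLe (a ζ) (T ζ) (f ζ) (sSup (a '' Set.Iio ξ)) (⋃ ζ ∈ Set.Iio ξ, T ζ) g) ∧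
      ∀ (β : Ordinal) (S : Set BSeq) (h : BSeq → BSeq),
        IsCond β S → IsWitness β S h →
        (∀ ζ < ξ, QsLe (a ζ) (T ζ) (f ζ) β S h) →
        QsLe (sSup (a '' Set.Iio ξ)) (⋃ ζ ∈ Set.Iio ξ, T ζ) g β S h :=
  stmt5_general lam ξ hξlim a T f hcond hmono
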